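/- Let 0 < q < 1 and λ ∈ ℝ. Then for every t > 0, the left-sided Caputo fractional derivative of order q of the function s ↦ E_q(λ s^q) equals λ E_q(λ t^q); explicitly, (1/Γ(1−q)) ∫_0^t (t−s)^{−q} (d/ds)[E_q(λ s^q)] ds = λ E_q(λ t^q). -/

import Mathlib

/-!
For `s > 0`, `E_q(λ s^q) = 1 + ∑ₙ λⁿ⁺¹ s^(q(n+1)) / Γ(q(n+1) + 1)`, and since `Γ(a + 1) = a Γ(a)`
the termwise derivative is `∑ₙ λⁿ⁺¹ s^(q(n+1)-1) / Γ(q(n+1))`. The Caputo derivative is the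
Riemann–Liouville integral of order `1 - q` of this derivative, and the Beta integral gives
`I^α (s^(a-1) / Γ a) = t^(a+α-1) / Γ(a+α)`, which sends the `n`-th term to
`λ ⋅ λⁿ t^(qn) / Γ(qn + 1)`. Log-convexity of `Γ` gives `Γ(y) / Γ(y + q) → 0`, so by the ratio test all the series converge
absolutely, which justifies differentiating and integrating term by term.
-/

open Real intervalIntegral

/-- The Mittag-Leffler function `E_q(z) = ∑ₙ zⁿ / Γ(q n + 1)`. -/
noncomputable def mittagLeffler (q z : ℝ) : ℝ :=
  ∑' n : ℕ, z ^ n / Real.Gamma (q * n + 1)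

open Filter Topology MeasureTheory Set

namespace Real

theorem Gamma_add_one_le_Gamma_add_mul_rpow {q y : ℝ} (hq0 : 0 < q) (hq1 : q < 1) (hy : 0 < y) :
    Gamma (y + 1) ≤ Gamma (y + q) * (y + q) ^ (1 - q) := by
  have hyq : 0 < y + q := by linarith
  have hG : 0 < Gamma (y + q) := Gamma_pos_of_pos hyq
  have h := Gamma_mul_add_mul_le_rpow_Gamma_mul_rpow_Gamma hyq (by linarith : 0 < y + q + 1)
    hq0 (by linarith : 0 < 1 - q) (by ring)
  calc Gamma (y + 1) = Gamma (q * (y + q) + (1 - q) * (y + q + 1)) := by ring_nf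
    _ ≤ Gamma (y + q) ^ q * Gamma (y + q + 1) ^ (1 - q) := h
    _ = Gamma (y + q) * (y + q) ^ (1 - q) := by
      rw [Gamma_add_one hyq.ne', mul_rpow hyq.le hG.le, mul_left_comm, ← rpow_add hG,
        add_sub_cancel, rpow_one, mul_comm]

theorem tendsto_Gamma_div_Gamma_add_atTop {q : ℝ} (hq0 : 0 < q) (hq1 : q < 1) :
    Tendsto (fun y => Gamma y / Gamma (y + q)) atTop (𝓝 0) := by
  have hlim : Tendsto (fun y : ℝ => 2 * y ^ (-q)) atTop (𝓝 0) := by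
    simpa using (tendsto_rpow_neg_atTop hq0).const_mul 2
  refine tendsto_of_tendsto_of_tendsto_of_le_of_le' tendsto_const_nhds hlim ?_ ?_
  · filter_upwards [eventually_gt_atTop 0] with y hy
    exact div_nonneg (Gamma_pos_of_pos hy).le (Gamma_pos_of_pos (by linarith)).le
  · filter_upwards [eventually_ge_atTop 1] with y hy
    have hy0 : 0 < y := by linarith
    have hyq : 0 < y + q := by linarith
    have hshift : (y + q) ^ (1 - q) ≤ 2 * y ^ (1 - q) :=
      calc (y + q) ^ (1 - q) ≤ (2 * y) ^ (1 - q) := by gcongr; linarith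
        _ = 2 ^ (1 - q) * y ^ (1 - q) := mul_rpow zero_le_two hy0.le
        _ ≤ 2 * y ^ (1 - q) := by
          gcongr
          exact rpow_le_self_of_one_le one_le_two (by linarith)
    rw [div_le_iff₀ (Gamma_pos_of_pos hyq)]
    refine le_of_mul_le_mul_left ?_ hy0
    calc y * Gamma y = Gamma (y + 1) := (Gamma_add_one hy0.ne').symm
      _ ≤ Gamma (y + q) * (y + q) ^ (1 - q) := Gamma_add_one_le_Gamma_add_mul_rpow hq0 hq1 hy0
      _ ≤ Gamma (y + q) * (2 * y ^ (1 - q)) := by gcongr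
      _ = y * (2 * y ^ (-q) * Gamma (y + q)) := by
        rw [sub_eq_add_neg, rpow_add hy0, rpow_one]; ring

theorem summable_pow_div_Gamma_mul_add {q : ℝ} (hq0 : 0 < q) (hq1 : q < 1) (z b : ℝ) :
    Summable fun n : ℕ => z ^ n / Gamma (q * n + b) := by
  rcases eq_or_ne z 0 with rfl | hz
  · exact (hasSum_single 0 fun n hn => by simp [hn]).summable
  have hy : Tendsto (fun n : ℕ => q * n + b) atTop atTop :=
    tendsto_atTop_add_const_right _ b (tendsto_natCast_atTop_atTop.const_mul_atTop hq0)
  have hpos : ∀ᶠ n : ℕ in atTop, 0 < q * n + b := hy.eventually (eventually_gt_atTop 0)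
  refine summable_of_ratio_test_tendsto_lt_one zero_lt_one
    (hpos.mono fun n hn => div_ne_zero (pow_ne_zero n hz) (Gamma_pos_of_pos hn).ne') ?_
  have hratio := ((tendsto_Gamma_div_Gamma_add_atTop hq0 hq1).comp hy).const_mul ‖z‖
  rw [mul_zero] at hratio
  refine hratio.congr' (hpos.mono fun n hn => ?_)
  have hstep : q * ((n + 1 : ℕ) : ℝ) + b = q * n + b + q := by push_cast; ring
  have hΓ := Gamma_pos_of_pos hn
  have hΓ' := Gamma_pos_of_pos (show 0 < q * n + b + q by linarith)
  simp only [Function.comp_apply, norm_div, norm_pow, hstep, Real.norm_of_nonneg hΓ.le,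
    Real.norm_of_nonneg hΓ'.le]
  field_simp
  ring

theorem hasDerivAt_rpow_div_Gamma_add_one {a s : ℝ} (ha : a ≠ 0) (hs : s ≠ 0) :
    HasDerivAt (fun u => u ^ a / Gamma (a + 1)) (s ^ (a - 1) / Gamma a) s := by
  refine ((hasDerivAt_rpow_const (p := a) (Or.inl hs)).div_const (Gamma (a + 1))).congr_deriv ?_
  rw [Gamma_add_one ha, mul_div_mul_left _ _ ha]

end Real

theorem hasSum_mittagLeffler_mul_rpow {q : ℝ} (hq0 : 0 < q) (hq1 : q < 1) (lam : ℝ) {u : ℝ}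
    (hu : 0 ≤ u) :
    HasSum (fun n : ℕ => lam ^ (n + 1) * (u ^ (q * (n + 1)) / Gamma (q * (n + 1) + 1)))
      (mittagLeffler q (lam * u ^ q) - 1) := by
  have htail := (hasSum_nat_add_iff' 1).2
    (summable_pow_div_Gamma_mul_add hq0 hq1 (lam * u ^ q) 1).hasSum
  rw [Finset.sum_range_one, pow_zero, Nat.cast_zero, mul_zero, zero_add, Gamma_one, div_one] at htail
  have hterm : (fun n : ℕ => lam ^ (n + 1) * (u ^ (q * (n + 1)) / Gamma (q * (n + 1) + 1))) =
      fun n : ℕ => (lam * u ^ q) ^ (n + 1) / Gamma (q * (n + 1 : ℕ) + 1) := by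
    funext n
    rw [mul_pow, ← rpow_natCast (u ^ q), ← rpow_mul hu, mul_div_assoc]
    push_cast
    rfl
  rw [hterm]
  exact htail

theorem hasDerivAt_mittagLeffler_mul_rpow {q : ℝ} (hq0 : 0 < q) (hq1 : q < 1) (lam : ℝ) {s : ℝ}
    (hs : 0 < s) :
    HasDerivAt (fun u => mittagLeffler q (lam * u ^ q))
      (∑' n : ℕ, lam ^ (n + 1) * (s ^ (q * (n + 1) - 1) / Gamma (q * (n + 1)))) s := by
  set R := |lam| * (2 * s) ^ q
  have hbound (n : ℕ) (u : ℝ) (hu : u ∈ Ioo (s / 2) (2 * s)) :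
      ‖lam ^ (n + 1) * (u ^ (q * (n + 1) - 1) / Gamma (q * (n + 1)))‖ ≤
        2 / s * R * (R ^ n / Gamma (q * n + q)) := by
    have hu0 : 0 < u := by linarith [hu.1]
    have hqn : q * ((n : ℝ) + 1) = q * n + q := by ring
    have hΓ : 0 < Gamma (q * n + q) := Gamma_pos_of_pos (by positivity)
    have hpow : u ^ (q * n + q - 1) ≤ ((2 * s) ^ q) ^ (n + 1) * (2 / s) :=
      calc u ^ (q * n + q - 1) = u ^ (q * (n + 1 : ℕ)) / u := by
            rw [rpow_sub_one hu0.ne']; push_cast; ring_nf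
        _ ≤ (2 * s) ^ (q * (n + 1 : ℕ)) / (s / 2) := by
            gcongr
            · exact hu.2.le
            · exact hu.1.le
        _ = ((2 * s) ^ q) ^ (n + 1) * (2 / s) := by
            rw [rpow_mul (by positivity), rpow_natCast]; field_simp
    rw [hqn, norm_mul, norm_div, norm_pow, Real.norm_eq_abs, Real.norm_of_nonneg (by positivity),
      Real.norm_of_nonneg hΓ.le]
    calc |lam| ^ (n + 1) * (u ^ (q * n + q - 1) / Gamma (q * n + q))
        ≤ |lam| ^ (n + 1) * (((2 * s) ^ q) ^ (n + 1) * (2 / s) / Gamma (q * n + q)) := by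
          gcongr
      _ = 2 / s * R * (R ^ n / Gamma (q * n + q)) := by
          simp only [R]; ring
  have hderiv := hasDerivAt_tsum_of_isPreconnected
    ((summable_pow_div_Gamma_mul_add hq0 hq1 R q).mul_left (2 / s * R)) isOpen_Ioo
    isPreconnected_Ioo
    (fun n u hu => (hasDerivAt_rpow_div_Gamma_add_one (by positivity)
      (by linarith [hu.1] : (0:ℝ) < u).ne').const_mul (lam ^ (n + 1)))
    hbound (y₀ := s) (y := s) (by constructor <;> linarith) ?_ (by constructor <;> linarith)
  · refine (hderiv.const_add 1).congr_of_eventuallyEq ?_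
    filter_upwards [Ioi_mem_nhds hs] with u hu
    rw [(hasSum_mittagLeffler_mul_rpow hq0 hq1 lam hu.le).tsum_eq]
    ring
  · exact (hasSum_mittagLeffler_mul_rpow hq0 hq1 lam hs.le).summable

theorem integral_sub_rpow_mul_rpow {α a t : ℝ} (hα : 0 < α) (ha : 0 < a) (ht : 0 < t) :
    ∫ s in (0:ℝ)..t, (t - s) ^ (α - 1) * s ^ (a - 1) =
      Gamma a * Gamma α / Gamma (a + α) * t ^ (a + α - 1) := by
  have hbeta := Complex.betaIntegral_scaled a α ht
  rw [Complex.betaIntegral_eq_Gamma_mul_div _ _ (by simpa using ha) (by simpa using hα)] at hbeta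
  apply Complex.ofReal_injective
  rw [← intervalIntegral.integral_ofReal]
  push_cast
  rw [← Complex.Gamma_ofReal, ← Complex.Gamma_ofReal, ← Complex.Gamma_ofReal,
    Complex.ofReal_cpow ht.le, mul_comm]
  push_cast
  rw [← hbeta]
  refine integral_congr fun s hs => ?_
  rw [uIcc_of_le ht.le] at hs
  rw [mul_comm, Complex.ofReal_cpow hs.1, Complex.ofReal_cpow (sub_nonneg.2 hs.2)]
  push_cast
  ring

theorem integral_sub_rpow_mul_rpow_div_Gamma {α a t : ℝ} (hα : 0 < α) (ha : 0 < a) (ht : 0 < t) :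
    ∫ s in (0:ℝ)..t, (t - s) ^ (α - 1) * (s ^ (a - 1) / Gamma a) =
      Gamma α * (t ^ (a + α - 1) / Gamma (a + α)) := by
  simp_rw [← mul_div_assoc, intervalIntegral.integral_div, integral_sub_rpow_mul_rpow hα ha ht]
  field_simp [(Gamma_pos_of_pos ha).ne']

theorem intervalIntegrable_sub_rpow_mul_rpow_div_Gamma {α a t : ℝ} (hα : 0 < α) (ha : 0 < a)
    (ht : 0 < t) :
    IntervalIntegrable (fun s => (t - s) ^ (α - 1) * (s ^ (a - 1) / Gamma a)) volume 0 t := by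
  refine intervalIntegrable_of_integral_ne_zero ?_
  rw [integral_sub_rpow_mul_rpow_div_Gamma hα ha ht]
  have := Gamma_pos_of_pos hα
  have := Gamma_pos_of_pos (add_pos ha hα)
  positivity

/-- The Riemann–Liouville integral `I^α g (t)`; the Caputo derivative of order `q` is
`I^(1-q) f'`. -/
noncomputable def riemannLiouvilleIntegral (α : ℝ) (g : ℝ → ℝ) (t : ℝ) : ℝ :=
  1 / Gamma α * ∫ s in (0:ℝ)..t, (t - s) ^ (α - 1) * g s

theorem riemannLiouvilleIntegral_eq_tsum {α t : ℝ} (hα : 0 < α) (ht : 0 < t) {g : ℝ → ℝ}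
    {c a : ℕ → ℝ} (ha : ∀ n, 0 < a n)
    (hg : ∀ s ∈ Ioc 0 t, g s = ∑' n, c n * (s ^ (a n - 1) / Gamma (a n)))
    (hsum : Summable fun n => |c n| * (t ^ (a n + α - 1) / Gamma (a n + α))) :
    riemannLiouvilleIntegral α g t = ∑' n, c n * (t ^ (a n + α - 1) / Gamma (a n + α)) := by
  set K : ℕ → ℝ → ℝ := fun n s => (t - s) ^ (α - 1) * (s ^ (a n - 1) / Gamma (a n))
  have hK_int (n : ℕ) :
      ∫ s in Ioc 0 t, K n s = Gamma α * (t ^ (a n + α - 1) / Gamma (a n + α)) := by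
    rw [← integral_of_le ht.le, integral_sub_rpow_mul_rpow_div_Gamma hα (ha n) ht]
  have hK_nonneg (n : ℕ) : ∀ s ∈ Ioc 0 t, 0 ≤ K n s := fun s hs => by
    have := Gamma_pos_of_pos (ha n)
    have := sub_nonneg.2 hs.2
    have := hs.1
    positivity
  have hint (n : ℕ) : Integrable (fun s => c n * K n s) (volume.restrict (Ioc 0 t)) :=
    ((intervalIntegrable_sub_rpow_mul_rpow_div_Gamma hα (ha n) ht).1).const_mul (c n)
  have hnorm (n : ℕ) : ∫ s in Ioc 0 t, ‖c n * K n s‖ =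
      Gamma α * (|c n| * (t ^ (a n + α - 1) / Gamma (a n + α))) := by
    rw [setIntegral_congr_fun measurableSet_Ioc fun s hs => by
      rw [norm_mul, Real.norm_eq_abs, Real.norm_of_nonneg (hK_nonneg n s hs)],
      MeasureTheory.integral_const_mul, hK_int]
    ring
  calc riemannLiouvilleIntegral α g t
      = 1 / Gamma α * ∫ s in Ioc 0 t, ∑' n, c n * K n s := by
        rw [riemannLiouvilleIntegral, integral_of_le ht.le]
        congr 1
        refine setIntegral_congr_fun measurableSet_Ioc fun s hs => ?_
        simp only [K, hg s hs, ← tsum_mul_left, mul_left_comm]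
    _ = 1 / Gamma α * ∑' n, c n * ∫ s in Ioc 0 t, K n s := by
        rw [← integral_tsum_of_summable_integral_norm hint
          (by simp_rw [hnorm]; exact hsum.mul_left _)]
        simp_rw [MeasureTheory.integral_const_mul]
    _ = ∑' n, c n * (t ^ (a n + α - 1) / Gamma (a n + α)) := by
        simp_rw [hK_int, mul_left_comm (c _), tsum_mul_left, ← mul_assoc]
        rw [one_div_mul_cancel (Gamma_pos_of_pos hα).ne', one_mul]

/-- The left-sided Caputo fractional derivative of order `q` of
`s ↦ E_q(λ s^q)` equals `λ E_q(λ t^q)` for `t > 0`. -/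
theorem caputo_deriv_mittagLeffler
    (q lam : ℝ) (hq0 : 0 < q) (hq1 : q < 1) :
    ∀ t : ℝ, 0 < t →
      (1 / Real.Gamma (1 - q)) *
          ∫ s in (0:ℝ)..t, (t - s) ^ (-q) * deriv (fun u => mittagLeffler q (lam * u ^ q)) s =
        lam * mittagLeffler q (lam * t ^ q) := by
  intro t ht
  have hterm (c : ℝ) (n : ℕ) :
      c ^ (n + 1) * (t ^ (q * (n + 1) + (1 - q) - 1) / Gamma (q * (n + 1) + (1 - q))) =
        c * ((c * t ^ q) ^ n / Gamma (q * n + 1)) := by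
    rw [show q * (n + 1) + (1 - q) - 1 = q * n by ring,
      show q * (n + 1) + (1 - q) = q * n + 1 by ring, rpow_mul ht.le, rpow_natCast]
    ring
  have hcaputo := riemannLiouvilleIntegral_eq_tsum (sub_pos.2 hq1) ht
    (a := fun n : ℕ => q * (n + 1)) (c := fun n => lam ^ (n + 1)) (fun n => by positivity)
    (fun s hs => (hasDerivAt_mittagLeffler_mul_rpow hq0 hq1 lam hs.1).deriv)
    (by simp_rw [abs_pow, hterm]; exact (summable_pow_div_Gamma_mul_add hq0 hq1 _ 1).mul_left _)
  rw [riemannLiouvilleIntegral, sub_sub_cancel_left] at hcaputo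
  simp_rw [hcaputo, hterm, tsum_mul_left, mittagLeffler]
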